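/- Let v_{k-1} be an inductive valuation of K[x] with key polynomial φ_k for the augmentation v_k = [v_{k-1}; v_k(φ_k) = μ_k], and let a ∈ K[x] be a polynomial that is not equivalence divisible by φ_k in v_{k-1}. Write a = α + β φ_k with deg α < deg φ_k. Then v_{k-1}(a) = v_{k-1}(α) and a ∼_{v_k} α. -/

import Mathlib

/-!
Since `a` is not equivalence divisible by `φ`, it is not `u`-equivalent to `β φ`, which forces
`u α ≤ u (β φ)` and hence `u α ≤ u a`; conversely `α` is the constant coefficient of the
`φ`-adic expansion of `a`, so `u a ≤ u α` because `u` is computed on that expansion.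
The augmentation takes the same value as `u` on `α` (degree below `deg φ`), dominates `u`
everywhere, and is strictly larger on every multiple of `φ` of finite `u`-value, since `μ > u φ`.
Thus `w (a - α) = w (β φ) > u α = w α`, i.e. `a ∼_w α`.
-/

open Polynomial

variable {K : Type*} [Field K] {Γ : Type*} [AddCommGroup Γ] [LinearOrder Γ] [IsOrderedAddMonoid Γ]

/-- `g ∼_w h` : equivalence in the (pseudo-)valuation `w` (MacLane). -/
def EquivV {R : Type*} [CommRing R] (w : AddValuation R (WithTop Γ)) (g h : R) : Prop :=
  min (w g) (w h) < w (g - h) ∨ (w g = ⊤ ∧ w h = ⊤)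

/-- `φ` equivalence-divides `g` in `w`. -/
def EqDvd {R : Type*} [CommRing R] (w : AddValuation R (WithTop Γ)) (φ g : R) : Prop :=
  ∃ a : R, EquivV w g (a * φ)

/-- `φ` is equivalence irreducible in `w`. -/
def EqIrred {R : Type*} [CommRing R] (w : AddValuation R (WithTop Γ)) (φ : R) : Prop :=
  ∀ a b : R, EqDvd w φ (a * b) → EqDvd w φ a ∨ EqDvd w φ b

/-- `φ` is minimal in `w`. -/
def MinimalV (w : AddValuation (Polynomial K) (WithTop Γ)) (φ : Polynomial K) : Prop :=
  ∀ g : Polynomial K, g ≠ 0 → EqDvd w φ g → φ.degree ≤ g.degree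

/-- `φ` is a key polynomial over `w`. -/
def KeyOver (w : AddValuation (Polynomial K) (WithTop Γ)) (φ : Polynomial K) : Prop :=
  φ.Monic ∧ 0 < φ.degree ∧ EqIrred w φ ∧ MinimalV w φ

/-- `w = [u; w φ = μ]` is the augmented (inductive) valuation of MacLane: on the `φ`-adic
expansion `g = Σ cᵢ φ^i` (with `deg cᵢ < deg φ`) one has `w g = min ᵢ (u cᵢ + i μ)`. -/
def IsAugmentation (u w : AddValuation (Polynomial K) (WithTop Γ)) (φ : Polynomial K)
    (μ : WithTop Γ) : Prop :=
  w φ = μ ∧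
  ∀ (g : Polynomial K) (n : ℕ) (c : ℕ → Polynomial K),
    (∀ i, (c i).degree < φ.degree) → g = ∑ i ∈ Finset.range n, c i * φ ^ i →
    w g = (Finset.range n).inf fun i => u (c i) + i • μ

/-- The coefficients of the `φ`-adic expansion: `phiCoeff φ i g` is the coefficient of `φ^i`. -/
noncomputable def phiCoeff (φ : Polynomial K) : ℕ → Polynomial K → Polynomial K
  | 0, g => g %ₘ φ
  | (i+1), g => phiCoeff φ i (g /ₘ φ)

/-- The self-computation (inductiveness) property: `w` computes values of `φ`-adic
expansions as the min of the values of the terms. -/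
def ExpansionInf (w : AddValuation (Polynomial K) (WithTop Γ)) (φ : Polynomial K) : Prop :=
  ∀ (g : Polynomial K) (n : ℕ) (c : ℕ → Polynomial K),
    (∀ i, (c i).degree < φ.degree) → g = ∑ i ∈ Finset.range n, c i * φ ^ i →
    w g = (Finset.range n).inf fun i => w (c i * φ ^ i)

/-- Effective degree `D_φ(g)` with respect to `w`. -/
noncomputable def effDeg (w : AddValuation (Polynomial K) (WithTop Γ)) (φ g : Polynomial K) : ℕ :=
  sSup {i : ℕ | w g = w (phiCoeff φ i g * φ ^ i)}

lemma phiCoeff_degree_lt {φ : K[X]} (hm : φ.Monic) (g : K[X]) (i : ℕ) :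
    (phiCoeff φ i g).degree < φ.degree := by
  induction i generalizing g with
  | zero => exact degree_modByMonic_lt g hm
  | succ j ih => exact ih (g /ₘ φ)

lemma sum_phiCoeff_mul_pow {φ : K[X]} (hm : φ.Monic) (hd : 0 < φ.degree) (g : K[X]) :
    g = ∑ i ∈ Finset.range (g.natDegree + 1), phiCoeff φ i g * φ ^ i := by
  suffices h : ∀ n (g : K[X]), g.natDegree < n + 1 →
      g = ∑ i ∈ Finset.range (n + 1), phiCoeff φ i g * φ ^ i from h _ g (Nat.lt_succ_self _)
  intro n
  induction n with
  | zero =>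
    intro g hg
    have hgφ : g.degree < φ.degree :=
      (degree_le_of_natDegree_le (Nat.lt_one_iff.mp hg).le).trans_lt hd
    simp [phiCoeff, (modByMonic_eq_self_iff hm).2 hgφ]
  | succ n ih =>
    intro g hg
    have hφ : 0 < φ.natDegree := natDegree_pos_iff_degree_pos.mpr hd
    have hq : (g /ₘ φ).natDegree < n + 1 := by
      rw [natDegree_divByMonic g hm]; omega
    rw [Finset.sum_range_succ']
    have hshift : ∑ i ∈ Finset.range (n + 1), phiCoeff φ (i + 1) g * φ ^ (i + 1)
        = φ * ∑ i ∈ Finset.range (n + 1), phiCoeff φ i (g /ₘ φ) * φ ^ i := by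
      rw [Finset.mul_sum]
      exact Finset.sum_congr rfl fun i _ => by rw [phiCoeff]; ring
    rw [hshift, ← ih _ hq, pow_zero, mul_one, phiCoeff, add_comm]
    exact (modByMonic_add_div g φ).symm

lemma equivV_of_lt_sub {R : Type*} [CommRing R] {w : AddValuation R (WithTop Γ)} {g h : R}
    (hlt : w h < w (g - h)) : EquivV w g h :=
  Or.inl ((min_le_right _ _).trans_lt hlt)

namespace ExpansionInf

variable {u : AddValuation K[X] (WithTop Γ)} {φ : K[X]}

lemma apply_le_apply_modByMonic (hself : ExpansionInf u φ) (hm : φ.Monic) (hd : 0 < φ.degree)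
    (g : K[X]) : u g ≤ u (g %ₘ φ) := by
  rw [hself g _ _ (phiCoeff_degree_lt hm g) (sum_phiCoeff_mul_pow hm hd g)]
  simpa [phiCoeff] using
    Finset.inf_le (f := fun i => u (phiCoeff φ i g * φ ^ i)) (Finset.mem_range.2 g.natDegree.succ_pos)

end ExpansionInf

namespace IsAugmentation

variable {u w : AddValuation K[X] (WithTop Γ)} {φ : K[X]} {μ : WithTop Γ}

lemma apply_of_degree_lt (haug : IsAugmentation u w φ μ) {g : K[X]} (hg : g.degree < φ.degree) :
    w g = u g := by
  rw [haug.2 g 1 (fun _ => g) (fun _ => hg) (by simp)]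
  simp

lemma apply_le (haug : IsAugmentation u w φ μ) (hself : ExpansionInf u φ) (hm : φ.Monic)
    (hd : 0 < φ.degree) (hμ : u φ ≤ μ) (g : K[X]) : u g ≤ w g := by
  have hc := phiCoeff_degree_lt hm g
  have hg := sum_phiCoeff_mul_pow hm hd g
  rw [hself g _ _ hc hg, haug.2 g _ _ hc hg]
  refine Finset.inf_mono_fun fun i _ => ?_
  rw [u.map_mul, u.map_pow]
  exact add_le_add_right (nsmul_le_nsmul_right hμ i) _

lemma lt_apply_mul (haug : IsAugmentation u w φ μ) (hself : ExpansionInf u φ) (hm : φ.Monic)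
    (hd : 0 < φ.degree) (hμ : u φ < μ) {x : WithTop Γ} (hx : x ≠ ⊤) {g : K[X]}
    (hxg : x ≤ u (g * φ)) : x < w (g * φ) := by
  have hwg : u g + μ ≤ w (g * φ) := by
    rw [w.map_mul, haug.1]
    exact add_le_add_left (haug.apply_le hself hm hd hμ.le g) μ
  by_cases hg : u g = ⊤
  · rw [hg, top_add, top_le_iff] at hwg
    exact hwg ▸ lt_top_iff_ne_top.2 hx
  · calc x ≤ u g + u φ := u.map_mul g φ ▸ hxg
      _ < u g + μ := WithTop.add_lt_add_left hg hμ
      _ ≤ w (g * φ) := hwg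

end IsAugmentation

/-- **Lemma 4.3 of [M], Lemma 1.1 of [V].**  Let `w = [u; w φ = μ]` be the
augmentation of the inductive valuation `u` by a key polynomial `φ` over `u` with
`μ > u φ`, and let `a ∈ K[x]` be not equivalence divisible by `φ` in `u`.  Write
`a = α + β φ` with `deg α < deg φ`.  Then `u a = u α` and `a ∼_w α`. -/
theorem stmt_16 {K : Type*} [Field K] {Γ : Type*} [AddCommGroup Γ] [LinearOrder Γ] [IsOrderedAddMonoid Γ]
    (u w : AddValuation (Polynomial K) (WithTop Γ)) (φ : Polynomial K) (μ : WithTop Γ)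
    (hkey : KeyOver u φ) (hμ : u φ < μ)
    (haug : IsAugmentation u w φ μ) (hself : ExpansionInf u φ)
    (a α β : Polynomial K) (hα : α.degree < φ.degree) (hab : a = α + β * φ)
    (hnd : ¬ EqDvd u φ a) :
    u a = u α ∧ EquivV w a α := by
  obtain ⟨hm, hd, -, -⟩ := hkey
  have hsub_α : a - α = β * φ := by rw [hab]; ring
  have hsub_βφ : a - β * φ = α := by rw [hab]; ring
  have hmod : a %ₘ φ = α := by
    rw [hab, add_modByMonic, (modByMonic_eq_self_iff hm).2 hα,
      (modByMonic_eq_zero_iff_dvd hm).2 (dvd_mul_left φ β), add_zero]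
  have hαβφ : u α ≤ u (β * φ) := by
    by_contra! hlt
    exact hnd ⟨β, equivV_of_lt_sub (hsub_βφ ▸ hlt)⟩
  have hua : u a = u α := by
    refine le_antisymm (hmod ▸ hself.apply_le_apply_modByMonic hm hd a) ?_
    exact hab ▸ (le_min le_rfl hαβφ).trans (u.map_add α (β * φ))
  have hα_top : u α ≠ ⊤ := fun htop =>
    hnd ⟨0, Or.inr ⟨hua.trans htop, by rw [zero_mul, u.map_zero]⟩⟩
  refine ⟨hua, equivV_of_lt_sub ?_⟩
  rw [haug.apply_of_degree_lt hα, hsub_α]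
  exact haug.lt_apply_mul hself hm hd hμ hα_top hαβφ
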